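/- arXiv:1511.04334 — 4 statements merged into one kernel-verified Lean document; each statement's English description precedes it below -/
import Mathlib

section
/- If V ~ N(-kI, kJ) with k, I, J > 0, then E[1 ∧ exp(V)] = Φ(-kI/√(kJ)) + exp(-kI + kJ/2)·Φ(-√(kJ) + kI/√(kJ)), where Φ is the standard normal CDF. -/
open MeasureTheory ProbabilityTheory Real Set
open scoped NNReal

/-! Write `σ = √v` and split the integral at `0`. On `{x > 0}` the integrand is `1`, contributing
`P(V > 0) = Φ(μ/σ)`. On `{x ≤ 0}` it is `eˣ`, and completing the square turns `eˣ` times the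
`N(μ, σ²)` density into `e^{μ + σ²/2}` times the `N(μ + σ², σ²)` density, whose mass on `{x ≤ 0}`
is `Φ(-σ - μ/σ)`. -/

variable {μ : ℝ} {v : ℝ≥0}

lemma gaussianReal_map_standardize (hv : v ≠ 0) :
    (gaussianReal μ v).map (fun x ↦ (x - μ) / √v) = gaussianReal 0 1 := by
  have h : (fun x : ℝ ↦ (x - μ) / √v) = (· / √v) ∘ (· - μ) := rfl
  rw [h, ← Measure.map_map (by fun_prop) (by fun_prop), gaussianReal_map_sub_const,
    gaussianReal_map_div_const, sub_self, zero_div]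
  congr 1
  ext
  simp [Real.sq_sqrt v.coe_nonneg, hv]

lemma gaussianReal_real_Iic (hv : v ≠ 0) (c : ℝ) :
    (gaussianReal μ v).real (Iic c) = cdf (gaussianReal 0 1) ((c - μ) / √v) := by
  have hσ : 0 < √(v : ℝ) := Real.sqrt_pos.2 (by positivity)
  rw [cdf_eq_real, ← gaussianReal_map_standardize (μ := μ) hv,
    map_measureReal_apply (by fun_prop) measurableSet_Iic]
  congr 1
  ext x
  simp [div_le_div_iff_of_pos_right hσ]

lemma gaussianReal_real_Ioi (hv : v ≠ 0) (c : ℝ) :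
    (gaussianReal μ v).real (Ioi c) = cdf (gaussianReal 0 1) ((μ - c) / √v) := by
  have : NullSingletonClass (gaussianReal (-μ) v) := nullSingletonClass_gaussianReal hv
  rw [← neg_sub_neg, ← gaussianReal_real_Iic hv, ← measureReal_congr (Iio_ae_eq_Iic (a := -c)),
    ← gaussianReal_map_neg, map_measureReal_apply (by fun_prop) measurableSet_Iio]
  congr 1
  ext x
  simp

lemma exp_mul_gaussianPDFReal (μ : ℝ) (v : ℝ≥0) (x : ℝ) :
    exp x * gaussianPDFReal μ v x = exp (μ + v / 2) * gaussianPDFReal (μ + v) v x := by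
  rcases eq_or_ne v 0 with rfl | hv
  · simp
  simp only [gaussianPDFReal]
  rw [mul_left_comm, ← Real.exp_add, mul_left_comm, ← Real.exp_add]
  congr 2
  field_simp
  ring

lemma setIntegral_exp_gaussianReal (hv : v ≠ 0) {s : Set ℝ} (hs : MeasurableSet s) :
    ∫ x in s, exp x ∂gaussianReal μ v = exp (μ + v / 2) * (gaussianReal (μ + v) v).real s := by
  rw [measureReal_def, gaussianReal_apply_eq_integral _ hv,
    ENNReal.toReal_ofReal (integral_nonneg fun _ ↦ gaussianPDFReal_nonneg _ _ _),
    ← integral_const_mul, gaussianReal_of_var_ne_zero _ hv, restrict_withDensity hs,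
    integral_withDensity_eq_integral_toReal_smul (measurable_gaussianPDF _ _)
      (ae_of_all _ fun _ ↦ gaussianPDF_lt_top)]
  simp_rw [toReal_gaussianPDF, smul_eq_mul, mul_comm _ (exp _), exp_mul_gaussianPDFReal]

lemma cdf_gaussianReal_zero_one (x : ℝ) :
    cdf (gaussianReal 0 1) x = ∫ t in Iic x, (√(2 * π))⁻¹ * exp (-t ^ 2 / 2) := by
  rw [cdf_eq_real, measureReal_def, gaussianReal_apply_eq_integral 0 one_ne_zero,
    ENNReal.toReal_ofReal (integral_nonneg fun _ ↦ gaussianPDFReal_nonneg _ _ _)]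
  simp [gaussianPDFReal]

theorem integral_min_one_exp_gaussianReal (hv : v ≠ 0) :
    ∫ x, min 1 (exp x) ∂gaussianReal μ v =
      cdf (gaussianReal 0 1) (μ / √v) +
        exp (μ + v / 2) * cdf (gaussianReal 0 1) (-√v - μ / √v) := by
  have hint : Integrable (fun x ↦ min 1 (exp x)) (gaussianReal μ v) :=
    .of_bound (by fun_prop) 1 (ae_of_all _ fun x ↦ by
      rw [norm_of_nonneg (by positivity)]; exact min_le_left _ _)
  have h_neg : ∫ x in Iic 0, min 1 (exp x) ∂gaussianReal μ v =
      exp (μ + v / 2) * cdf (gaussianReal 0 1) (-√v - μ / √v) := by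
    rw [setIntegral_congr_fun measurableSet_Iic fun x hx ↦ min_eq_right (exp_le_one_iff.2 hx),
      setIntegral_exp_gaussianReal hv measurableSet_Iic, gaussianReal_real_Iic hv]
    congr 2
    have hσ : √(v : ℝ) ≠ 0 := (Real.sqrt_pos.2 (by positivity)).ne'
    field_simp
    rw [Real.sq_sqrt v.coe_nonneg]
    ring
  have h_pos :
      ∫ x in Ioi 0, min 1 (exp x) ∂gaussianReal μ v = cdf (gaussianReal 0 1) (μ / √v) := by
    rw [setIntegral_congr_fun measurableSet_Ioi fun x hx ↦ min_eq_left (one_le_exp hx.le),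
      setIntegral_const, gaussianReal_real_Ioi hv, sub_zero, smul_eq_mul, mul_one]
  rw [← intervalIntegral.integral_Iic_add_Ioi hint.integrableOn hint.integrableOn, h_neg, h_pos,
    add_comm]

theorem stmt_5_general (k I J : ℝ) (hk : 0 < k) (hJ : 0 < J)
    (Φ : ℝ → ℝ)
    (hΦ : ∀ x, Φ x = ∫ t in Set.Iic x, (Real.sqrt (2 * π))⁻¹ * Real.exp (-t ^ 2 / 2)) :
    (∫ v, min 1 (Real.exp v) ∂(gaussianReal (-(k * I)) (Real.toNNReal (k * J)))) =
      Φ (-(k * I) / Real.sqrt (k * J)) +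
        Real.exp (-(k * I) + k * J / 2) * Φ (-Real.sqrt (k * J) + k * I / Real.sqrt (k * J)) := by
  have hkJ : 0 < k * J := mul_pos hk hJ
  obtain rfl : Φ = cdf (gaussianReal 0 1) :=
    funext fun x ↦ (hΦ x).trans (cdf_gaussianReal_zero_one x).symm
  rw [integral_min_one_exp_gaussianReal (Real.toNNReal_pos.2 hkJ).ne', Real.coe_toNNReal _ hkJ.le,
    neg_div, sub_neg_eq_add]

/-- If V ~ N(-kI, kJ) with k, I, J > 0, then
E[1 ∧ exp(V)] = Φ(-kI/√(kJ)) + exp(-kI + kJ/2)·Φ(-√(kJ) + kI/√(kJ)). -/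
theorem stmt_5 (k I J : ℝ) (hk : 0 < k) (hI : 0 < I) (hJ : 0 < J)
    (Φ : ℝ → ℝ)
    (hΦ : ∀ x, Φ x = ∫ t in Set.Iic x, (Real.sqrt (2 * π))⁻¹ * Real.exp (-t ^ 2 / 2)) :
    (∫ v, min 1 (Real.exp v) ∂(gaussianReal (-(k * I)) (Real.toNNReal (k * J)))) =
      Φ (-(k * I) / Real.sqrt (k * J)) +
        Real.exp (-(k * I) + k * J / 2) * Φ (-Real.sqrt (k * J) + k * I / Real.sqrt (k * J)) :=
  stmt_5_general k I J hk hJ Φ hΦ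
end

section
/- If V ~ N(-m, 2m) for m > 0 (i.e. variance equal to twice the absolute value of the negative mean), then E[1 ∧ exp(V)] = 2Φ(-√(m/2)), where Φ is the standard normal CDF. -/
/-!
Exponential tilting: the Gaussian density satisfies `p_{μ,v}(x) eˣ = e^{μ+v/2} p_{μ+v,v}(x)`.
Splitting `𝔼[1 ∧ e^V]` at `0` therefore gives `e^{μ+v/2} ℙ(N(μ+v,v) ≤ 0) + ℙ(N(μ,v) > 0)`.
For `μ = -v/2` the prefactor is `1` and the two laws `N(±v/2, v)` are mirror images of each other,
so both terms equal `Φ(-√v/2)`; with `v = 2m` this is `Φ(-√(m/2))`.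
-/

open MeasureTheory ProbabilityTheory Real Set
open scoped NNReal

namespace ProbabilityTheory

lemma gaussianPDFReal_mul_exp (μ : ℝ) (v : ℝ≥0) (x : ℝ) :
    gaussianPDFReal μ v x * exp x = exp (μ + v / 2) * gaussianPDFReal (μ + v) v x := by
  rcases eq_or_ne v 0 with rfl | hv
  · simp
  have hv' : (v : ℝ) ≠ 0 := by exact_mod_cast hv
  simp only [gaussianPDFReal]
  rw [mul_left_comm, mul_assoc, ← exp_add, ← exp_add]
  congr 2
  field_simp
  ring

lemma gaussianReal_real_eq_setIntegral (μ : ℝ) {v : ℝ≥0} (hv : v ≠ 0) (s : Set ℝ) :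
    (gaussianReal μ v).real s = ∫ x in s, gaussianPDFReal μ v x := by
  rw [measureReal_def, gaussianReal_apply_eq_integral μ hv,
    ENNReal.toReal_ofReal (integral_nonneg fun x ↦ gaussianPDFReal_nonneg μ v x)]

lemma gaussianReal_real_Iic (μ : ℝ) {v : ℝ≥0} (hv : v ≠ 0) (a : ℝ) :
    (gaussianReal μ v).real (Iic a) = (gaussianReal 0 1).real (Iic ((a - μ) / √v)) := by
  have hsqrt : 0 < √(v : ℝ) := by positivity
  have hstd : (gaussianReal μ v).map (fun x ↦ (x - μ) / √v) = gaussianReal 0 1 := by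
    rw [← Function.comp_def (· / √v) (· - μ), ← Measure.map_map (by fun_prop) (by fun_prop),
      gaussianReal_map_sub_const, gaussianReal_map_div_const, sub_self, zero_div]
    congr
    ext
    simp [sq_sqrt v.coe_nonneg, hv]
  have hpre : (fun x ↦ (x - μ) / √v) ⁻¹' Iic ((a - μ) / √v) = Iic a := by
    ext x
    simp [div_le_div_iff_of_pos_right hsqrt]
  rw [← hstd, map_measureReal_apply (by fun_prop) measurableSet_Iic, hpre]

lemma gaussianReal_real_Ioi_neg (μ : ℝ) {v : ℝ≥0} (hv : v ≠ 0) :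
    (gaussianReal (-μ) v).real (Ioi 0) = (gaussianReal μ v).real (Iic 0) := by
  have := nullSingletonClass_gaussianReal (μ := μ) hv
  rw [← gaussianReal_map_neg, map_measureReal_apply (by fun_prop) measurableSet_Ioi,
    show (fun x : ℝ ↦ -x) ⁻¹' Ioi 0 = Iio 0 by ext; simp]
  exact measureReal_congr Iio_ae_eq_Iic

lemma gaussianReal_zero_one_real_Iic (b : ℝ) :
    (gaussianReal 0 1).real (Iic b) = ∫ t in Iic b, (√(2 * π))⁻¹ * exp (-t ^ 2 / 2) := by
  rw [gaussianReal_real_eq_setIntegral 0 one_ne_zero]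
  simp [gaussianPDFReal]

lemma integral_min_one_exp_gaussianReal (μ : ℝ) {v : ℝ≥0} (hv : v ≠ 0) :
    ∫ x, min 1 (exp x) ∂gaussianReal μ v =
      exp (μ + v / 2) * (gaussianReal (μ + v) v).real (Iic 0) +
        (gaussianReal μ v).real (Ioi 0) := by
  have hIic : ∀ x ∈ Iic (0 : ℝ),
      gaussianPDFReal μ v x • min 1 (exp x) = exp (μ + v / 2) * gaussianPDFReal (μ + v) v x :=
    fun x hx ↦ by rw [min_eq_right (exp_le_one_iff.mpr hx), smul_eq_mul, gaussianPDFReal_mul_exp]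
  have hIoi : ∀ x ∈ Ioi (0 : ℝ), gaussianPDFReal μ v x • min 1 (exp x) = gaussianPDFReal μ v x :=
    fun x hx ↦ by rw [min_eq_left (one_le_exp_iff.mpr (le_of_lt hx)), smul_eq_mul, mul_one]
  rw [integral_gaussianReal_eq_integral_smul hv,
    ← intervalIntegral.integral_Iic_add_Ioi
      (((integrable_gaussianPDFReal _ v).const_mul _).integrableOn.congr_fun
        (fun x hx ↦ (hIic x hx).symm) measurableSet_Iic)
      ((integrable_gaussianPDFReal μ v).integrableOn.congr_fun
        (fun x hx ↦ (hIoi x hx).symm) measurableSet_Ioi),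
    setIntegral_congr_fun measurableSet_Iic hIic, setIntegral_congr_fun measurableSet_Ioi hIoi,
    integral_const_mul, gaussianReal_real_eq_setIntegral _ hv,
    gaussianReal_real_eq_setIntegral _ hv]

lemma integral_min_one_exp_gaussianReal_neg_half {v : ℝ≥0} (hv : v ≠ 0) :
    ∫ x, min 1 (exp x) ∂gaussianReal (-(v / 2)) v =
      2 * (gaussianReal 0 1).real (Iic (-(√v / 2))) := by
  rw [integral_min_one_exp_gaussianReal _ hv, neg_add_cancel, exp_zero, one_mul,
    show -((v : ℝ) / 2) + v = v / 2 by ring, gaussianReal_real_Ioi_neg _ hv,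
    gaussianReal_real_Iic _ hv, show (0 - (v : ℝ) / 2) / √v = -(√v / 2) by
      field_simp; rw [sq_sqrt v.coe_nonneg]; ring]
  ring

end ProbabilityTheory

/-- If V ~ N(-m, 2m), m > 0, then E[1 ∧ exp(V)] = 2Φ(-√(m/2)). -/
theorem stmt_6 (m : ℝ) (hm : 0 < m)
    (Φ : ℝ → ℝ)
    (hΦ : ∀ x, Φ x = ∫ t in Set.Iic x, (Real.sqrt (2 * π))⁻¹ * Real.exp (-t ^ 2 / 2)) :
    (∫ v, min 1 (Real.exp v) ∂(gaussianReal (-m) (Real.toNNReal (2 * m)))) =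
      2 * Φ (-Real.sqrt (m / 2)) := by
  have hv : (2 * m).toNNReal ≠ 0 := by simpa using hm
  have hcoe : ((2 * m).toNNReal : ℝ) = 2 * m := coe_toNNReal _ (by positivity)
  have hmean : ((2 * m).toNNReal : ℝ) / 2 = m := by rw [hcoe]; ring
  have hsd : √((2 * m).toNNReal : ℝ) / 2 = √(m / 2) := by
    rw [hcoe, show 2 * m = 2 ^ 2 * (m / 2) by ring, sqrt_mul (by positivity), sqrt_sq two_pos.le]
    ring
  have h := integral_min_one_exp_gaussianReal_neg_half hv
  rw [hmean, hsd] at h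
  rw [h, hΦ, gaussianReal_zero_one_real_Iic]
end

section
/- Let ω : ℝ → ℝ≥0 with ω(x) = f(x)/q(x) for densities f, q, and suppose sup_x ω(x) = K < ∞. Then for any x with f(x) > 0 and any random variable Y with density q, the acceptance probability of the independence sampler from x satisfies E[1 ∧ (ω(Y)/ω(x))] ≥ (1/K)·E[ω(Y)·1{ω(Y) ≤ ω(x)}] + P(ω(Y) > ω(x)) > 0; in particular, since E[ω(Y)] = ∫ f(y) dy = 1, the single-site acceptance probability is bounded below by 1/K. -/
open MeasureTheory Real

/-!
From a state `x`, the integrand `q y * min 1 (ω y / ω x)` equals `q y * ω y / ω x ≥ f y / K`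
where `ω y ≤ ω x`, and equals `q y` elsewhere; this gives the first bound. Since `f ≤ K q`,
the part `∫_{ω > ω x} q` is at least `K⁻¹ ∫_{ω > ω x} f`, so the first bound is itself at least
`K⁻¹ ∫ f = K⁻¹ > 0`.
-/

lemma mul_div_cancel_of_pos_imp_pos {a b : ℝ} (ha : 0 ≤ a) (hab : 0 < a → 0 < b) :
    b * (a / b) = a := by
  rcases eq_or_ne b 0 with hb | hb
  · have : a = 0 := by_contra fun h => (hab (ha.lt_of_ne' h)).ne' hb
    simp [this, hb]
  · exact mul_div_cancel₀ a hb

section Split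

variable {α : Type*} [MeasurableSpace α] {μ : Measure α} {q ω : α → ℝ} {c K : ℝ}

lemma le_integral_mul_min_one_div (hq : Integrable q μ) (hq0 : 0 ≤ q) (hω : AEMeasurable ω μ)
    (hω0 : 0 ≤ ω) (hc : 0 < c) (hcK : c ≤ K) :
    K⁻¹ * (∫ y in {y | ω y ≤ c}, q y * ω y ∂μ) + ∫ y in {y | c < ω y}, q y ∂μ
      ≤ ∫ y, q y * min 1 (ω y / c) ∂μ := by
  set s := {y | ω y ≤ c}
  have hs : NullMeasurableSet s μ := nullMeasurableSet_le hω aemeasurable_const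
  have hsc : {y | c < ω y} = sᶜ := by ext; simp [s]
  have hg : Integrable (fun y => q y * min 1 (ω y / c)) μ := by
    refine hq.mono' (hq.aemeasurable.mul ?_).aestronglyMeasurable (ae_of_all _ fun y => ?_)
    · exact aemeasurable_const.min (hω.div_const c)
    · have h0 : 0 ≤ min 1 (ω y / c) := le_min zero_le_one (div_nonneg (hω0 y) hc.le)
      rw [Real.norm_of_nonneg (mul_nonneg (hq0 y) h0)]
      exact mul_le_of_le_one_right (hq0 y) (min_le_left _ _)
  have h_on_s : K⁻¹ * ∫ y in s, q y * ω y ∂μ ≤ ∫ y in s, q y * min 1 (ω y / c) ∂μ := by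
    rw [← integral_const_mul]
    refine integral_mono_of_nonneg (ae_of_all _ fun y => ?_) hg.restrict
      ((ae_restrict_iff'₀ hs).2 (ae_of_all _ fun y (hy : ω y ≤ c) => ?_))
    · exact mul_nonneg (inv_nonneg.2 (hc.trans_le hcK).le) (mul_nonneg (hq0 y) (hω0 y))
    · show K⁻¹ * (q y * ω y) ≤ q y * min 1 (ω y / c)
      rw [min_eq_right ((div_le_one hc).2 hy), inv_mul_eq_div, mul_div_assoc]
      exact mul_le_mul_of_nonneg_left (div_le_div_of_nonneg_left (hω0 y) hc hcK) (hq0 y)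
  have h_on_sc : ∫ y in sᶜ, q y ∂μ = ∫ y in sᶜ, q y * min 1 (ω y / c) ∂μ :=
    setIntegral_congr_fun₀ hs.compl fun y (hy : ¬ω y ≤ c) => by
      rw [min_eq_left ((one_le_div hc).2 (not_le.1 hy).le), mul_one]
  rw [hsc, ← integral_add_compl₀ hs hg, h_on_sc]
  gcongr

lemma inv_mul_integral_le_setIntegral_add_setIntegral (hq : Integrable q μ) (hq0 : 0 ≤ q)
    (hqω : Integrable (fun y => q y * ω y) μ) (hω : AEMeasurable ω μ) (hK : 0 < K)
    (hωK : ∀ y, ω y ≤ K) (c : ℝ) :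
    K⁻¹ * ∫ y, q y * ω y ∂μ
      ≤ K⁻¹ * (∫ y in {y | ω y ≤ c}, q y * ω y ∂μ) + ∫ y in {y | c < ω y}, q y ∂μ := by
  set s := {y | ω y ≤ c}
  have hs : NullMeasurableSet s μ := nullMeasurableSet_le hω aemeasurable_const
  have hsc : {y | c < ω y} = sᶜ := by ext; simp [s]
  have h_on_sc : K⁻¹ * ∫ y in sᶜ, q y * ω y ∂μ ≤ ∫ y in sᶜ, q y ∂μ := by
    rw [← integral_const_mul]
    refine integral_mono_ae (hqω.const_mul _).restrict hq.restrict (ae_of_all _ fun y => ?_)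
    rw [inv_mul_le_iff₀ hK, mul_comm K]
    exact mul_le_mul_of_nonneg_left (hωK y) (hq0 y)
  rw [hsc, ← integral_add_compl₀ hs hqω, mul_add]
  exact add_le_add le_rfl h_on_sc

end Split

/-- With ω = f/q bounded by K, the acceptance probability from any x with
f(x) > 0 is at least (1/K)·E[ω(Y)1{ω(Y)≤ω(x)}] + P(ω(Y)>ω(x)) > 0, and is bounded
below by 1/K. -/
theorem stmt_7 (f q : ℝ → ℝ) (K : ℝ) (hK : 0 < K)
    (hf0 : ∀ x, 0 ≤ f x) (hq0 : ∀ x, 0 ≤ q x)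
    (hf1 : ∫ x, f x = 1) (hq1 : ∫ x, q x = 1)
    (hac : ∀ x, 0 < f x → 0 < q x)
    (ω : ℝ → ℝ) (hω : ∀ x, ω x = f x / q x)
    (hKbd : ∀ x, ω x ≤ K)
    (x : ℝ) (hx : 0 < f x) :
    (K⁻¹ * (∫ y in {y | ω y ≤ ω x}, q y * ω y) + ∫ y in {y | ω x < ω y}, q y)
        ≤ ∫ y, q y * min 1 (ω y / ω x) ∧
    0 < K⁻¹ * (∫ y in {y | ω y ≤ ω x}, q y * ω y) + ∫ y in {y | ω x < ω y}, q y ∧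
    K⁻¹ ≤ ∫ y, q y * min 1 (ω y / ω x) := by
  have hfi : Integrable f := .of_integral_ne_zero (by simp [hf1])
  have hqi : Integrable q := .of_integral_ne_zero (by simp [hq1])
  have hqω : ∀ y, q y * ω y = f y := fun y => by
    rw [hω]; exact mul_div_cancel_of_pos_imp_pos (hf0 y) (hac y)
  have hωm : AEMeasurable ω := funext hω ▸ hfi.aemeasurable.div hqi.aemeasurable
  have hω0 : 0 ≤ ω := fun y => by rw [hω]; exact div_nonneg (hf0 y) (hq0 y)
  have hωx : 0 < ω x := by rw [hω]; exact div_pos hx (hac x hx)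
  have hacc := le_integral_mul_min_one_div hqi hq0 hωm hω0 hωx (hKbd x)
  have hlow := inv_mul_integral_le_setIntegral_add_setIntegral hqi hq0 (by simpa only [hqω] using hfi) hωm hK hKbd (ω x)
  rw [show ∫ y, q y * ω y = 1 by simp only [hqω, hf1], mul_one] at hlow
  exact ⟨hacc, (inv_pos.2 hK).trans_le hlow, hlow.trans hacc⟩
end

section
/- Let f(x) = q(x)(1+ε(x)) as above with ∫ qε = 0 and |ε| ≤ c < 1, let g = log(f/q) = log(1+ε), X ~ f and Y ~ q independent. Then Var(g(Y) - g(X)) = 2∫ q(x)ε(x)² dx + R' with |R'| ≤ C'·∫ q(x)|ε(x)|³ dx for a constant C' depending only on c; in particular J := Var(g(Y) - g(X)) equals 2I up to third-order terms in ε. -/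
/-!
On `|u| ≤ c < 1` one has `|log (1 + u)| ≤ |u| / (1 - c)` and `|log (1 + u) - u| ≤ u² / (1 - c)`.
Writing everything as integrals against the probability measure `q dx`, the sum of the two
variances minus `2 ∫ q ε²` equals `2 ∫ q (g² - ε²) + ∫ q ε g² - (∫ q g)² - (∫ q g + ∫ q ε g)²`.
The first two terms are pointwise `O(|ε|³)`; the two means are `O(∫ q ε²)` because `∫ q ε = 0`,
and `(∫ q ε²)² ≤ ∫ q |ε|³` since `|ε| ≤ 1`.
-/

open MeasureTheory Real

lemma abs_log_one_add_le {c u : ℝ} (hc : c < 1) (hu : |u| ≤ c) :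
    |log (1 + u)| ≤ (1 - c)⁻¹ * |u| := by
  have hu1 : |-u| < 1 := by rw [abs_neg]; linarith
  have h := abs_log_sub_add_sum_range_le hu1 0
  simp only [Finset.range_zero, Finset.sum_empty, zero_add, pow_one, sub_neg_eq_add, abs_neg] at h
  calc |log (1 + u)| ≤ |u| / (1 - |u|) := h
    _ ≤ |u| / (1 - c) := by gcongr
    _ = (1 - c)⁻¹ * |u| := div_eq_inv_mul _ _

lemma abs_log_one_add_sub_self_le {c u : ℝ} (hc : c < 1) (hu : |u| ≤ c) :
    |log (1 + u) - u| ≤ (1 - c)⁻¹ * u ^ 2 := by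
  have hu1 : |-u| < 1 := by rw [abs_neg]; linarith
  have h := abs_log_sub_add_sum_range_le hu1 1
  simp only [Finset.range_one, Finset.sum_singleton, Nat.cast_zero, zero_add, pow_one, div_one,
    sub_neg_eq_add, abs_neg, one_add_one_eq_two, sq_abs] at h
  calc |log (1 + u) - u| = |-u + log (1 + u)| := by ring_nf
    _ ≤ u ^ 2 / (1 - |u|) := h
    _ ≤ u ^ 2 / (1 - c) := by gcongr
    _ = (1 - c)⁻¹ * u ^ 2 := div_eq_inv_mul _ _

lemma abs_sq_sub_sq_le_of_abs_sub_le {K g e : ℝ} (hg : |g| ≤ K * |e|)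
    (hge : |g - e| ≤ K * e ^ 2) : |g ^ 2 - e ^ 2| ≤ K * (K + 1) * |e| ^ 3 := by
  have hsum : |g + e| ≤ (K + 1) * |e| := by linarith [abs_add_le g e]
  calc |g ^ 2 - e ^ 2| = |g - e| * |g + e| := by rw [← abs_mul]; ring_nf
    _ ≤ K * e ^ 2 * ((K + 1) * |e|) :=
      mul_le_mul hge hsum (abs_nonneg _) ((abs_nonneg _).trans hge)
    _ = K * (K + 1) * |e| ^ 3 := by rw [← sq_abs]; ring

lemma abs_mul_sq_le_of_abs_le_mul {K g e : ℝ} (hg : |g| ≤ K * |e|) :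
    |e * g ^ 2| ≤ K ^ 2 * |e| ^ 3 :=
  calc |e * g ^ 2| = |e| * |g| ^ 2 := by rw [abs_mul, abs_pow]
    _ ≤ |e| * (K * |e|) ^ 2 := by gcongr
    _ = K ^ 2 * |e| ^ 3 := by ring

lemma abs_mul_le_of_abs_le_mul {K g e : ℝ} (hg : |g| ≤ K * |e|) : |e * g| ≤ K * e ^ 2 :=
  calc |e * g| = |e| * |g| := abs_mul _ _
    _ ≤ |e| * (K * |e|) := by gcongr
    _ = K * e ^ 2 := by rw [← sq_abs e]; ring

lemma sq_le_of_abs_le_mul {K b t s : ℝ} (hb : |b| ≤ K * t) (hts : t ^ 2 ≤ s) :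
    b ^ 2 ≤ K ^ 2 * s :=
  calc b ^ 2 = |b| ^ 2 := (sq_abs b).symm
    _ ≤ (K * t) ^ 2 := by gcongr
    _ = K ^ 2 * t ^ 2 := by ring
    _ ≤ K ^ 2 * s := by gcongr

variable {α : Type*} [MeasurableSpace α] {μ : Measure α}

lemma integrable_pow_mul_pow_of_abs_le [IsFiniteMeasure μ] {u v : α → ℝ} (hu : Measurable u)
    (hv : Measurable v) {a b : ℝ} (hua : ∀ x, |u x| ≤ a) (hvb : ∀ x, |v x| ≤ b) (i j : ℕ) :
    Integrable (fun x => u x ^ i * v x ^ j) μ := by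
  refine .of_bound (by fun_prop) (a ^ i * b ^ j) (ae_of_all _ fun x => ?_)
  rw [norm_mul, norm_pow, norm_pow, Real.norm_eq_abs, Real.norm_eq_abs]
  exact mul_le_mul (pow_le_pow_left₀ (abs_nonneg _) (hua x) i)
    (pow_le_pow_left₀ (abs_nonneg _) (hvb x) j) (by positivity)
    (pow_nonneg ((abs_nonneg _).trans (hua x)) i)

lemma abs_integral_le_mul_integral_of_abs_le {h b : α → ℝ} {C : ℝ} (hb : Integrable b μ)
    (hhb : ∀ x, |h x| ≤ C * b x) : |∫ x, h x ∂μ| ≤ C * ∫ x, b x ∂μ := by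
  rw [← integral_const_mul]
  exact norm_integral_le_of_norm_le (hb.const_mul C)
    (ae_of_all _ fun x => (Real.norm_eq_abs _).trans_le (hhb x))

lemma sq_integral_sq_le_integral_abs_pow_three [IsProbabilityMeasure μ] {e : α → ℝ}
    (he2 : Integrable (fun x => e x ^ 2) μ) (he3 : Integrable (fun x => |e x| ^ 3) μ)
    (he1 : ∀ x, |e x| ≤ 1) : (∫ x, e x ^ 2 ∂μ) ^ 2 ≤ ∫ x, |e x| ^ 3 ∂μ := by
  set t := ∫ x, e x ^ 2 ∂μ
  -- `2 t e² ≤ t² |e| + |e|³ ≤ t² + |e|³`, integrated against the probability measure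
  have hpoint : ∀ x, 2 * t * e x ^ 2 ≤ t ^ 2 + |e x| ^ 3 := fun x => by
    rw [← sq_abs (e x)]
    nlinarith [mul_nonneg (abs_nonneg (e x)) (sq_nonneg (t - |e x|)),
      mul_le_mul_of_nonneg_left (he1 x) (sq_nonneg t)]
  have := integral_mono (g := fun x => t ^ 2 + |e x| ^ 3) (he2.const_mul (2 * t))
    ((integrable_const _).add he3) hpoint
  rw [integral_const_mul, integral_add (integrable_const _) he3, integral_const, probReal_univ,
    one_smul] at this
  nlinarith

lemma integral_withDensity_ofReal {q : α → ℝ} (hq0 : ∀ x, 0 ≤ q x) (hq : AEMeasurable q μ)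
    (h : α → ℝ) :
    ∫ x, h x ∂μ.withDensity (fun x => ENNReal.ofReal (q x)) = ∫ x, q x * h x ∂μ := by
  rw [integral_withDensity_eq_integral_toReal_smul₀ hq.ennreal_ofReal
    (ae_of_all _ fun _ => ENNReal.ofReal_lt_top)]
  simp only [ENNReal.toReal_ofReal (hq0 _), smul_eq_mul]

lemma isProbabilityMeasure_withDensity_ofReal {q : α → ℝ} (hq0 : ∀ x, 0 ≤ q x)
    (hq : Integrable q μ) (hq1 : ∫ x, q x ∂μ = 1) :
    IsProbabilityMeasure (μ.withDensity fun x => ENNReal.ofReal (q x)) := by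
  constructor
  rw [withDensity_apply _ MeasurableSet.univ, Measure.restrict_univ,
    ← ofReal_integral_eq_lintegral_ofReal hq (ae_of_all _ hq0), hq1, ENNReal.ofReal_one]

lemma abs_variance_add_tilted_variance_sub_le [IsProbabilityMeasure μ] {ε G : α → ℝ} {K : ℝ}
    (hε : Measurable ε) (hG : Measurable G) (hε1 : ∀ x, |ε x| ≤ 1) (hε0 : ∫ x, ε x ∂μ = 0)
    (hGK : ∀ x, |G x| ≤ K * |ε x|) (hGε : ∀ x, |G x - ε x| ≤ K * ε x ^ 2) :
    |((∫ x, G x ^ 2 ∂μ) - (∫ x, G x ∂μ) ^ 2) +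
        ((∫ x, (1 + ε x) * G x ^ 2 ∂μ) - (∫ x, (1 + ε x) * G x ∂μ) ^ 2) -
        2 * ∫ x, ε x ^ 2 ∂μ|
      ≤ 2 * K * (4 * K + 1) * ∫ x, |ε x| ^ 3 ∂μ := by
  have hGb (x : α) : |G x| ≤ |K| :=
    (hGK x).trans (by nlinarith [le_abs_self K, abs_nonneg K, hε1 x, abs_nonneg (ε x)])
  have hI (i j : ℕ) : Integrable (fun x => ε x ^ i * G x ^ j) μ :=
    integrable_pow_mul_pow_of_abs_le hε hG hε1 hGb i j
  have iG : Integrable G μ := by simpa using hI 0 1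
  have iG2 : Integrable (fun x => G x ^ 2) μ := by simpa using hI 0 2
  have iεG : Integrable (fun x => ε x * G x) μ := by simpa using hI 1 1
  have iεG2 : Integrable (fun x => ε x * G x ^ 2) μ := by simpa using hI 1 2
  have iε : Integrable ε μ := by simpa using hI 1 0
  have iε2 : Integrable (fun x => ε x ^ 2) μ := by simpa using hI 2 0
  have iε3 : Integrable (fun x => |ε x| ^ 3) μ := by simpa [abs_pow] using (hI 3 0).abs
  have hA : ∫ x, (1 + ε x) * G x ^ 2 ∂μ = ∫ x, G x ^ 2 ∂μ + ∫ x, ε x * G x ^ 2 ∂μ := by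
    simp_rw [add_mul, one_mul]; exact integral_add iG2 iεG2
  have hB : ∫ x, (1 + ε x) * G x ∂μ = ∫ x, G x ∂μ + ∫ x, ε x * G x ∂μ := by
    simp_rw [add_mul, one_mul]; exact integral_add iG iεG
  have hquad : |∫ x, G x ^ 2 ∂μ - ∫ x, ε x ^ 2 ∂μ| ≤ K * (K + 1) * ∫ x, |ε x| ^ 3 ∂μ := by
    rw [← integral_sub iG2 iε2]
    exact abs_integral_le_mul_integral_of_abs_le iε3 fun x =>
      abs_sq_sub_sq_le_of_abs_sub_le (hGK x) (hGε x)
  have hcubic : |∫ x, ε x * G x ^ 2 ∂μ| ≤ K ^ 2 * ∫ x, |ε x| ^ 3 ∂μ :=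
    abs_integral_le_mul_integral_of_abs_le iε3 fun x => abs_mul_sq_le_of_abs_le_mul (hGK x)
  have hmean : |∫ x, G x ∂μ| ≤ K * ∫ x, ε x ^ 2 ∂μ := by
    rw [← sub_zero (∫ x, G x ∂μ), ← hε0, ← integral_sub iG iε]
    exact abs_integral_le_mul_integral_of_abs_le iε2 hGε
  have hcross : |∫ x, ε x * G x ∂μ| ≤ K * ∫ x, ε x ^ 2 ∂μ :=
    abs_integral_le_mul_integral_of_abs_le iε2 fun x => abs_mul_le_of_abs_le_mul (hGK x)
  have hmoment := sq_integral_sq_le_integral_abs_pow_three iε2 iε3 hε1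
  have hmean_sq := sq_le_of_abs_le_mul hmean hmoment
  have hsum_sq := sq_le_of_abs_le_mul (b := ∫ x, G x ∂μ + ∫ x, ε x * G x ∂μ) (K := 2 * K)
    (by linarith [abs_add_le (∫ x, G x ∂μ) (∫ x, ε x * G x ∂μ)]) hmoment
  rw [hA, hB, abs_le]
  rw [abs_le] at hquad hcubic
  constructor <;> nlinarith

theorem stmt_16_general (c : ℝ) (hc1 : c < 1) :
    ∃ C' : ℝ, ∀ (q ε : ℝ → ℝ) (f g : ℝ → ℝ),
      (∀ x, 0 ≤ q x) → Integrable q → (∫ x, q x = 1) →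
      Measurable ε → (∀ x, |ε x| ≤ c) → (∫ x, q x * ε x = 0) →
      (∀ x, f x = q x * (1 + ε x)) →
      (∀ x, g x = Real.log (1 + ε x)) →
      |(((∫ x, q x * g x ^ 2) - (∫ x, q x * g x) ^ 2) +
          ((∫ x, f x * g x ^ 2) - (∫ x, f x * g x) ^ 2))
          - 2 * ∫ x, q x * ε x ^ 2|
        ≤ C' * ∫ x, q x * |ε x| ^ 3 := by
  refine ⟨2 * (1 - c)⁻¹ * (4 * (1 - c)⁻¹ + 1), fun q ε f g hq0 hq hq1 hε hεc hqε hf hg => ?_⟩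
  let ν := volume.withDensity fun x => ENNReal.ofReal (q x)
  have : IsProbabilityMeasure ν := isProbabilityMeasure_withDensity_ofReal hq0 hq hq1
  have hν (h : ℝ → ℝ) : ∫ x, q x * h x = ∫ x, h x ∂ν :=
    (integral_withDensity_ofReal hq0 hq.aemeasurable h).symm
  obtain rfl : g = fun x => log (1 + ε x) := funext hg
  simp only [hf, mul_assoc (q _), hν] at hqε ⊢
  exact abs_variance_add_tilted_variance_sub_le hε (by fun_prop)
    (fun x => (hεc x).trans hc1.le) hqε (fun x => abs_log_one_add_le hc1 (hεc x))
    (fun x => abs_log_one_add_sub_self_le hc1 (hεc x))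

/-- For f = q(1+ε), g = log(1+ε), X ~ f, Y ~ q independent,
Var(g(Y)-g(X)) = Var(g(Y)) + Var(g(X)) = 2∫qε² + R' with |R'| ≤ C'∫q|ε|³,
C' depending only on c. -/
theorem stmt_16 (c : ℝ) (hc0 : 0 ≤ c) (hc1 : c < 1) :
    ∃ C' : ℝ, ∀ (q ε : ℝ → ℝ) (f g : ℝ → ℝ),
      (∀ x, 0 ≤ q x) → Integrable q → (∫ x, q x = 1) →
      Measurable ε → (∀ x, |ε x| ≤ c) → (∫ x, q x * ε x = 0) →
      (∀ x, f x = q x * (1 + ε x)) →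
      (∀ x, g x = Real.log (1 + ε x)) →
      |(((∫ x, q x * g x ^ 2) - (∫ x, q x * g x) ^ 2) +
          ((∫ x, f x * g x ^ 2) - (∫ x, f x * g x) ^ 2))
          - 2 * ∫ x, q x * ε x ^ 2|
        ≤ C' * ∫ x, q x * |ε x| ^ 3 :=
  stmt_16_general c hc1
end
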